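/- There is a polynomial p such that for every simple directed graph G with n > 0 vertices: G has no Hamiltonian path if and only if there exists a normal tree-like proof of α_G → ⊥ in the intuitionistic natural deduction calculus NJ whose height is at most p(n). -/

import Mathlib

/-- Propositional formulas over variables `ν`, with `⊥`, `∧`, `∨`, `→`. -/
inductive PF (ν : Type) : Type
  | bot
  | var (x : ν)
  | and (a b : PF ν)
  | or (a b : PF ν)
  | imp (a b : PF ν)
deriving DecidableEq

namespace PF

/-- `¬γ` abbreviates `γ → ⊥`. -/
def neg {ν : Type} (a : PF ν) : PF ν := .imp a .bot

/-- Classical (Boolean) evaluation, with `⊥` interpreted as false. -/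
def evalB {ν : Type} (w : ν → Bool) : PF ν → Bool
  | .bot => false
  | .var x => w x
  | .and a b => a.evalB w && b.evalB w
  | .or a b => a.evalB w || b.evalB w
  | .imp a b => !(a.evalB w) || b.evalB w

end PF

/-- Classical satisfiability. -/
def PFSatisfiable {ν : Type} (a : PF ν) : Prop := ∃ w : ν → Bool, a.evalB w = true

/-- Classical tautologyhood. -/
def PFTautology {ν : Type} (a : PF ν) : Prop := ∀ w : ν → Bool, a.evalB w = true

/-- Conjunction of a list of formulas (the empty conjunction is the truth `⊥ → ⊥`). -/
def conjList {ν : Type} : List (PF ν) → PF ν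
  | [] => .imp .bot .bot
  | [a] => a
  | a :: b :: as => .and a (conjList (b :: as))

/-- Disjunction of a list of formulas (the empty disjunction is `⊥`). -/
def disjList {ν : Type} : List (PF ν) → PF ν
  | [] => .bot
  | [a] => a
  | a :: b :: as => .or a (disjList (b :: as))

/-- The propositional variable `X_{i,v}` : vertex `v` is visited at step `i`. -/
def X {n : ℕ} (i v : Fin n) : PF (Fin n × Fin n) := .var (i, v)

/-- `A` : every vertex is visited. -/
def formA (n : ℕ) : PF (Fin n × Fin n) :=
  conjList ((List.finRange n).map fun v =>
    disjList ((List.finRange n).map fun i => X i v))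

/-- `B` : there are no repetitions. -/
def formB (n : ℕ) : PF (Fin n × Fin n) :=
  conjList ((List.finRange n).map fun v =>
    conjList ((List.finRange n).map fun i =>
      conjList (((List.finRange n).filter fun j => j ≠ i).map fun j =>
        .imp (X i v) (.imp (X j v) .bot))))

/-- `C` : at each step at least one vertex is visited. -/
def formC (n : ℕ) : PF (Fin n × Fin n) :=
  conjList ((List.finRange n).map fun i =>
    disjList ((List.finRange n).map fun v => X i v))

/-- `D` : at each step at most one vertex is visited. -/
def formD (n : ℕ) : PF (Fin n × Fin n) :=
  conjList ((List.finRange n).map fun v =>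
    conjList (((List.finRange n).filter fun w => w ≠ v).map fun w =>
      conjList ((List.finRange n).map fun i =>
        .imp (X i v) (.imp (X i w) .bot))))

/-- `E` : if there is no edge from `v` to `w` then `w` is not visited immediately
after `v`. -/
def formE (n : ℕ) (adj : Fin n → Fin n → Bool) : PF (Fin n × Fin n) :=
  conjList ((List.finRange n).map fun v =>
    conjList (((List.finRange n).filter fun w => ¬ adj v w).map fun w =>
      conjList ((List.finRange (n - 1)).map fun i =>
        .imp (X ⟨i.val, by have := i.isLt; omega⟩ v)
          (.imp (X ⟨i.val + 1, by have := i.isLt; omega⟩ w) .bot))))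

/-- The formula `α_G = A ∧ B ∧ C ∧ D ∧ E` associated with the simple directed graph
`G` on `Fin n` with adjacency `adj`. -/
def alphaG (n : ℕ) (adj : Fin n → Fin n → Bool) : PF (Fin n × Fin n) :=
  .and (formA n) (.and (formB n) (.and (formC n) (.and (formD n) (formE n adj))))

/-- `G` has a Hamiltonian path: a sequence `v₁ … v_n` of vertices such that
`i ↦ vᵢ` is a bijection onto the vertex set and consecutive vertices are adjacent. -/
def HamPath (n : ℕ) (adj : Fin n → Fin n → Bool) : Prop :=
  ∃ v : Fin n → Fin n, Function.Bijective v ∧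
    ∀ (i : ℕ) (h : i + 1 < n), adj (v ⟨i, by omega⟩) (v ⟨i + 1, h⟩) = true

/-- Tree-like natural deductions in Prawitz's intuitionistic calculus NJ.  Each
constructor records the inference of which its root is the conclusion. -/
inductive NJT (ν : Type) : Type
  | leaf (φ : PF ν)
  | botE (φ : PF ν) (t : NJT ν)
  | andI (t₁ t₂ : NJT ν)
  | andE1 (a b : PF ν) (t : NJT ν)
  | andE2 (a b : PF ν) (t : NJT ν)
  | orI1 (b : PF ν) (t : NJT ν)
  | orI2 (a : PF ν) (t : NJT ν)
  | orE (a b : PF ν) (t t₁ t₂ : NJT ν)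
  | impI (a : PF ν) (t : NJT ν)
  | impE (a b : PF ν) (t₁ t₂ : NJT ν)

namespace NJT

variable {ν : Type}

/-- The formula labelling the root. -/
def lab : NJT ν → PF ν
  | leaf φ => φ
  | botE φ _ => φ
  | andI t₁ t₂ => .and t₁.lab t₂.lab
  | andE1 a _ _ => a
  | andE2 _ b _ => b
  | orI1 b t => .or t.lab b
  | orI2 a t => .or a t.lab
  | orE _ _ _ t₁ _ => t₁.lab
  | impI a t => .imp a t.lab
  | impE _ b _ _ => b

/-- Local correctness w.r.t. the NJ rules. -/
inductive Correct : NJT ν → Prop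
  | leaf (φ : PF ν) : Correct (leaf φ)
  | botE {φ : PF ν} {t : NJT ν} : t.lab = .bot → Correct t → Correct (botE φ t)
  | andI {t₁ t₂ : NJT ν} : Correct t₁ → Correct t₂ → Correct (andI t₁ t₂)
  | andE1 {a b : PF ν} {t : NJT ν} : t.lab = .and a b → Correct t → Correct (andE1 a b t)
  | andE2 {a b : PF ν} {t : NJT ν} : t.lab = .and a b → Correct t → Correct (andE2 a b t)
  | orI1 {b : PF ν} {t : NJT ν} : Correct t → Correct (orI1 b t)
  | orI2 {a : PF ν} {t : NJT ν} : Correct t → Correct (orI2 a t)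
  | orE {a b : PF ν} {t t₁ t₂ : NJT ν} : t.lab = .or a b → t₂.lab = t₁.lab →
      Correct t → Correct t₁ → Correct t₂ → Correct (orE a b t t₁ t₂)
  | impI {a : PF ν} {t : NJT ν} : Correct t → Correct (impI a t)
  | impE {a b : PF ν} {t₁ t₂ : NJT ν} : t₁.lab = a → t₂.lab = .imp a b →
      Correct t₁ → Correct t₂ → Correct (impE a b t₁ t₂)

/-- `ClosedUnder D t` : every assumption of `t` is discharged in `t` or belongs to
`D` (the formulas discharged below `t`); with `D = ∅` : all assumptions discharged. -/
inductive ClosedUnder : Set (PF ν) → NJT ν → Prop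
  | leaf {D : Set (PF ν)} {φ : PF ν} : φ ∈ D → ClosedUnder D (leaf φ)
  | botE {D : Set (PF ν)} {φ : PF ν} {t : NJT ν} :
      ClosedUnder D t → ClosedUnder D (botE φ t)
  | andI {D : Set (PF ν)} {t₁ t₂ : NJT ν} :
      ClosedUnder D t₁ → ClosedUnder D t₂ → ClosedUnder D (andI t₁ t₂)
  | andE1 {D : Set (PF ν)} {a b : PF ν} {t : NJT ν} :
      ClosedUnder D t → ClosedUnder D (andE1 a b t)
  | andE2 {D : Set (PF ν)} {a b : PF ν} {t : NJT ν} :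
      ClosedUnder D t → ClosedUnder D (andE2 a b t)
  | orI1 {D : Set (PF ν)} {b : PF ν} {t : NJT ν} :
      ClosedUnder D t → ClosedUnder D (orI1 b t)
  | orI2 {D : Set (PF ν)} {a : PF ν} {t : NJT ν} :
      ClosedUnder D t → ClosedUnder D (orI2 a t)
  | orE {D : Set (PF ν)} {a b : PF ν} {t t₁ t₂ : NJT ν} :
      ClosedUnder D t → ClosedUnder (insert a D) t₁ → ClosedUnder (insert b D) t₂ →
      ClosedUnder D (orE a b t t₁ t₂)
  | impI {D : Set (PF ν)} {a : PF ν} {t : NJT ν} :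
      ClosedUnder (insert a D) t → ClosedUnder D (impI a t)
  | impE {D : Set (PF ν)} {a b : PF ν} {t₁ t₂ : NJT ν} :
      ClosedUnder D t₁ → ClosedUnder D t₂ → ClosedUnder D (impE a b t₁ t₂)

/-- `t` concludes with an introduction rule. -/
def isIntro : NJT ν → Prop
  | andI _ _ => True
  | orI1 _ _ => True
  | orI2 _ _ => True
  | impI _ _ => True
  | _ => False

/-- Normality: no node is both the conclusion of an introduction rule and the major
premise of an elimination rule. -/
inductive Normal : NJT ν → Prop
  | leaf (φ : PF ν) : Normal (leaf φ)
  | botE {φ : PF ν} {t : NJT ν} : Normal t → ¬ t.isIntro → Normal (botE φ t)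
  | andI {t₁ t₂ : NJT ν} : Normal t₁ → Normal t₂ → Normal (andI t₁ t₂)
  | andE1 {a b : PF ν} {t : NJT ν} : Normal t → ¬ t.isIntro → Normal (andE1 a b t)
  | andE2 {a b : PF ν} {t : NJT ν} : Normal t → ¬ t.isIntro → Normal (andE2 a b t)
  | orI1 {b : PF ν} {t : NJT ν} : Normal t → Normal (orI1 b t)
  | orI2 {a : PF ν} {t : NJT ν} : Normal t → Normal (orI2 a t)
  | orE {a b : PF ν} {t t₁ t₂ : NJT ν} : Normal t → ¬ t.isIntro →
      Normal t₁ → Normal t₂ → Normal (orE a b t t₁ t₂)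
  | impI {a : PF ν} {t : NJT ν} : Normal t → Normal (impI a t)
  | impE {a b : PF ν} {t₁ t₂ : NJT ν} : Normal t₁ → Normal t₂ → ¬ t₂.isIntro →
      Normal (impE a b t₁ t₂)

/-- The height of an NJ deduction tree (length of its longest branch). -/
def height : NJT ν → ℕ
  | leaf _ => 0
  | botE _ t => t.height + 1
  | andI t₁ t₂ => max t₁.height t₂.height + 1
  | andE1 _ _ t => t.height + 1
  | andE2 _ _ t => t.height + 1
  | orI1 _ t => t.height + 1
  | orI2 _ t => t.height + 1
  | orE _ _ t t₁ t₂ => max t.height (max t₁.height t₂.height) + 1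
  | impI _ t => t.height + 1
  | impE _ _ t₁ t₂ => max t₁.height t₂.height + 1

end NJT

/-!
Soundness gives one direction: a Hamiltonian path yields a valuation satisfying `α_G`, so
`¬α_G` has no proof at all. Conversely, assume `α_G` and split, by `∨`-elimination on the
clauses `C₁, …, Cₙ` in turn, over all choices of the vertex visited at each step. A branch
thereby fixes a map `i ↦ vᵢ`; since it is not a Hamiltonian path, it repeats a vertex or uses
a non-edge, and a clause of `B` or `E` refutes it by two `→`-eliminations. The tree has `nⁿ`
leaves, but only its height matters: each of the `n` levels of splitting costs `O(n)`
(extracting `Cᵢ` from `α_G` and splitting an `n`-fold disjunction), so the height is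
`O(n²)`. Below the final `→`-introduction only eliminations occur, so the proof is normal.
-/

namespace PF

variable {ν : Type}

theorem evalB_conjList (w : ν → Bool) :
    ∀ L : List (PF ν), (conjList L).evalB w = L.all (·.evalB w)
  | [] => rfl
  | [_] => by simp [conjList]
  | a :: b :: as => by simp only [conjList, evalB, evalB_conjList w (b :: as), List.all_cons]

theorem evalB_disjList (w : ν → Bool) :
    ∀ L : List (PF ν), (disjList L).evalB w = L.any (·.evalB w)
  | [] => rfl
  | [_] => by simp [disjList]
  | a :: b :: as => by simp only [disjList, evalB, evalB_disjList w (b :: as), List.any_cons]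

end PF

namespace NJT

variable {ν : Type}

theorem evalB_lab_of_closedUnder {w : ν → Bool} {D : Set (PF ν)} {t : NJT ν}
    (hcl : t.ClosedUnder D) (hc : t.Correct) (hD : ∀ φ ∈ D, φ.evalB w = true) :
    t.lab.evalB w = true := by
  induction hcl with
  | leaf hm => exact hD _ hm
  | @impI _ a =>
    cases hc
    cases ha : a.evalB w <;> simp_all [lab, PF.evalB]
  | orE =>
    cases hc
    simp_all [lab, PF.evalB]
    tauto
  | _ =>
    cases hc
    simp_all [lab, PF.evalB]

theorem not_satisfiable_of_proof_neg {a : PF ν} {t : NJT ν} (hc : t.Correct)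
    (hcl : t.ClosedUnder ∅) (hlab : t.lab = PF.neg a) : ¬ PFSatisfiable a := by
  rintro ⟨w, hw⟩
  have := evalB_lab_of_closedUnder (w := w) hcl hc (by simp)
  simp [hlab, PF.neg, PF.evalB, hw] at this

/-- Unlike arbitrary deductions, those not ending with an introduction may serve as major
premises of eliminations without creating a redex. -/
def ElimDerivable (Γ : Set (PF ν)) (φ : PF ν) (h : ℕ) : Prop :=
  ∃ t : NJT ν, t.Correct ∧ t.Normal ∧ t.ClosedUnder Γ ∧ ¬ t.isIntro ∧ t.lab = φ ∧ t.height ≤ h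

theorem ClosedUnder.mono {D D' : Set (PF ν)} {t : NJT ν} (ht : t.ClosedUnder D) (hD : D ⊆ D') :
    t.ClosedUnder D' := by
  induction ht generalizing D' with
  | leaf hm => exact .leaf (hD hm)
  | botE _ ih => exact .botE (ih hD)
  | andI _ _ ih₁ ih₂ => exact .andI (ih₁ hD) (ih₂ hD)
  | andE1 _ ih => exact .andE1 (ih hD)
  | andE2 _ ih => exact .andE2 (ih hD)
  | orI1 _ ih => exact .orI1 (ih hD)
  | orI2 _ ih => exact .orI2 (ih hD)
  | orE _ _ _ ih ih₁ ih₂ =>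
    exact .orE (ih hD) (ih₁ (Set.insert_subset_insert hD)) (ih₂ (Set.insert_subset_insert hD))
  | impI _ ih => exact .impI (ih (Set.insert_subset_insert hD))
  | impE _ _ ih₁ ih₂ => exact .impE (ih₁ hD) (ih₂ hD)

namespace ElimDerivable

variable {Γ Γ' : Set (PF ν)} {a b c : PF ν} {h h' h₁ h₂ : ℕ}

theorem mono (hd : ElimDerivable Γ a h) (hh : h ≤ h') : ElimDerivable Γ a h' :=
  let ⟨t, hc, hn, hcl, hi, hl, ht⟩ := hd
  ⟨t, hc, hn, hcl, hi, hl, ht.trans hh⟩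

theorem mono_set (hd : ElimDerivable Γ a h) (hΓ : Γ ⊆ Γ') : ElimDerivable Γ' a h :=
  let ⟨t, hc, hn, hcl, hi, hl, ht⟩ := hd
  ⟨t, hc, hn, hcl.mono hΓ, hi, hl, ht⟩

theorem assumption (ha : a ∈ Γ) : ElimDerivable Γ a 0 :=
  ⟨.leaf a, .leaf a, .leaf a, .leaf ha, id, rfl, le_rfl⟩

theorem botE (hd : ElimDerivable Γ .bot h) : ElimDerivable Γ a (h + 1) :=
  let ⟨t, hc, hn, hcl, hi, hl, ht⟩ := hd
  ⟨.botE a t, .botE hl hc, .botE hn hi, .botE hcl, id, rfl, by simpa [height]⟩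

theorem andE1 (hd : ElimDerivable Γ (.and a b) h) : ElimDerivable Γ a (h + 1) :=
  let ⟨t, hc, hn, hcl, hi, hl, ht⟩ := hd
  ⟨.andE1 a b t, .andE1 hl hc, .andE1 hn hi, .andE1 hcl, id, rfl, by simpa [height]⟩

theorem andE2 (hd : ElimDerivable Γ (.and a b) h) : ElimDerivable Γ b (h + 1) :=
  let ⟨t, hc, hn, hcl, hi, hl, ht⟩ := hd
  ⟨.andE2 a b t, .andE2 hl hc, .andE2 hn hi, .andE2 hcl, id, rfl, by simpa [height]⟩

theorem impE (hmin : ElimDerivable Γ a h₁) (hmaj : ElimDerivable Γ (.imp a b) h₂) :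
    ElimDerivable Γ b (max h₁ h₂ + 1) :=
  let ⟨t₁, hc₁, hn₁, hcl₁, _, hl₁, ht₁⟩ := hmin
  let ⟨t₂, hc₂, hn₂, hcl₂, hi₂, hl₂, ht₂⟩ := hmaj
  ⟨.impE a b t₁ t₂, .impE hl₁ hl₂ hc₁ hc₂, .impE hn₁ hn₂ hi₂, .impE hcl₁ hcl₂, id, rfl,
    by simp only [height]; omega⟩

theorem orE (hmaj : ElimDerivable Γ (.or a b) h) (hl : ElimDerivable (insert a Γ) c h₁)
    (hr : ElimDerivable (insert b Γ) c h₂) : ElimDerivable Γ c (max h (max h₁ h₂) + 1) :=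
  let ⟨t, hc, hn, hcl, hi, hlab, ht⟩ := hmaj
  let ⟨t₁, hc₁, hn₁, hcl₁, _, hl₁, ht₁⟩ := hl
  let ⟨t₂, hc₂, hn₂, hcl₂, _, hl₂, ht₂⟩ := hr
  ⟨.orE a b t t₁ t₂, .orE hlab (hl₂.trans hl₁.symm) hc hc₁ hc₂, .orE hn hi hn₁ hn₂,
    .orE hcl hcl₁ hcl₂, id, hl₁, by simp only [height]; omega⟩

theorem of_mem_conjList : ∀ {L : List (PF ν)} {h : ℕ}, a ∈ L →
    ElimDerivable Γ (conjList L) h → ElimDerivable Γ a (h + L.length)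
  | [_], _, ha, hd => by
    rw [List.mem_singleton.1 ha]
    exact hd.mono (by simp)
  | _ :: b :: as, _, ha, hd => by
    rcases List.mem_cons.1 ha with rfl | ha
    · exact hd.andE1.mono (by simp)
    · exact (of_mem_conjList (L := b :: as) ha hd.andE2).mono (by simp; omega)

theorem bot_of_neg_neg (ha : ElimDerivable Γ a h) (hb : ElimDerivable Γ b h)
    (hab : ElimDerivable Γ (.imp a (.imp b .bot)) h') : ElimDerivable Γ .bot (max h h' + 2) :=
  (hb.impE (ha.impE hab)).mono (by omega)

/-- Each branch receives a derivation of its disjunct rather than an assumption, since for a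
one-element list the disjunction is the disjunct itself. -/
theorem disjList_elim {H : ℕ} : ∀ {L : List (PF ν)} {Γ : Set (PF ν)} {h : ℕ},
    ElimDerivable Γ (disjList L) h →
    (∀ x ∈ L, ∀ Γ', Γ ⊆ Γ' → ElimDerivable Γ' x h → ElimDerivable Γ' c H) →
    ElimDerivable Γ c (max h H + L.length + 1)
  | [], _, _, hd, _ => hd.botE.mono (by omega)
  | [a], Γ, _, hd, hcases => (hcases a (by simp) Γ subset_rfl hd).mono (by omega)
  | a :: b :: as, _, _, hd, hcases =>
    have left : ElimDerivable (insert a _) c H :=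
      hcases a (by simp) _ (Set.subset_insert _ _)
        ((assumption (Set.mem_insert _ _)).mono (Nat.zero_le _))
    have right := disjList_elim (L := b :: as) (assumption (Set.mem_insert _ _))
      fun x hx Γ' hΓ hx' => hcases x (List.mem_cons_of_mem _ hx) Γ'
        ((Set.subset_insert _ _).trans hΓ) (hx'.mono (Nat.zero_le _))
    (hd.orE left right).mono (by simp; omega)

end ElimDerivable

theorem exists_proof_neg_of_elimDerivable_bot {a : PF ν} {h : ℕ}
    (hd : ElimDerivable {a} .bot h) :
    ∃ t : NJT ν, t.Correct ∧ t.Normal ∧ t.ClosedUnder ∅ ∧ t.lab = PF.neg a ∧ t.height ≤ h + 1 :=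
  let ⟨t, hc, hn, hcl, _, hl, ht⟩ := hd
  ⟨.impI a t, .impI hc, .impI hn, .impI (by rwa [← Set.singleton_def]),
    by rw [lab, hl, PF.neg], by simpa [height]⟩

end NJT

theorem satisfiable_alphaG_of_hamPath {n : ℕ} {adj : Fin n → Fin n → Bool}
    (h : HamPath n adj) : PFSatisfiable (alphaG n adj) := by
  obtain ⟨v, hbij, hedge⟩ := h
  refine ⟨fun p => decide (v p.1 = p.2), ?_⟩
  simp only [alphaG, PF.evalB, Bool.and_eq_true]
  refine ⟨?_, ?_, ?_, ?_, ?_⟩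
  · simpa [formA, PF.evalB_conjList, PF.evalB_disjList, X, PF.evalB, Function.Surjective]
      using hbij.2
  · simp only [formB, X, ne_eq, decide_not, PF.evalB_conjList, List.all_map, List.all_eq_true,
      List.mem_finRange, Function.comp_apply, List.all_filter, Bool.not_not, PF.evalB,
      Bool.or_false, Bool.or_eq_true, decide_eq_true_eq, Bool.not_eq_eq_eq_not, Bool.not_true,
      decide_eq_false_iff_not, forall_const]
    intro u i j
    by_contra! h
    exact h.1 (hbij.1 (h.2.2.trans h.2.1.symm))
  · simp [formC, PF.evalB_conjList, PF.evalB_disjList, X, PF.evalB]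
  · simp only [formD, X, ne_eq, decide_not, PF.evalB_conjList, List.all_map, List.all_eq_true,
      List.mem_finRange, Function.comp_apply, List.all_filter, Bool.not_not, PF.evalB,
      Bool.or_false, Bool.or_eq_true, decide_eq_true_eq, Bool.not_eq_eq_eq_not, Bool.not_true,
      decide_eq_false_iff_not, forall_const]
    intro u u'
    by_contra! ⟨hne, i, hu, hu'⟩
    exact hne (hu'.symm.trans hu)
  · simp only [formE, X, Bool.not_eq_true, Bool.decide_eq_false, PF.evalB_conjList, List.all_map,
      List.all_eq_true, List.mem_finRange, Function.comp_apply, List.all_filter, Bool.not_not,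
      Bool.or_eq_true, PF.evalB, Bool.or_false, Bool.not_eq_eq_eq_not, Bool.not_true,
      decide_eq_false_iff_not, forall_const]
    intro u u'
    by_contra! ⟨hadj, i, hu, hu'⟩
    have := hedge i (by omega)
    simp_all

theorem exists_collision_or_nonedge_of_not_hamPath {n : ℕ} {adj : Fin n → Fin n → Bool}
    (hno : ¬ HamPath n adj) (f : Fin n → Fin n) :
    (∃ i j, i ≠ j ∧ f i = f j) ∨ ∃ (i : ℕ) (hi : i + 1 < n),
      adj (f ⟨i, by omega⟩) (f ⟨i + 1, hi⟩) = false := by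
  by_contra! h
  refine hno ⟨f, Finite.injective_iff_bijective.1 fun i j hfij => ?_,
    fun i hi => by simpa using h.2 i hi⟩
  by_contra hij
  exact h.1 i j hij hfij

open NJT

section Refutation

variable {n : ℕ} {adj : Fin n → Fin n → Bool} {Γ : Set (PF (Fin n × Fin n))}

theorem elimDerivable_formC_clause (hα : alphaG n adj ∈ Γ) (i : Fin n) :
    ElimDerivable Γ (disjList ((List.finRange n).map fun v => X i v)) (n + 3) := by
  have hC : ElimDerivable Γ (formC n) 3 := (ElimDerivable.assumption hα).andE2.andE2.andE1
  exact (hC.of_mem_conjList (List.mem_map_of_mem (List.mem_finRange i))).mono (by simp; omega)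

theorem elimDerivable_formB_clause (hα : alphaG n adj ∈ Γ) {i j : Fin n} (hij : j ≠ i)
    (v : Fin n) : ElimDerivable Γ (.imp (X i v) (.imp (X j v) .bot)) (3 * n + 2) := by
  have hB : ElimDerivable Γ (formB n) 2 := (ElimDerivable.assumption hα).andE2.andE1
  have hv := hB.of_mem_conjList (List.mem_map_of_mem (List.mem_finRange v))
  have hi := hv.of_mem_conjList (List.mem_map_of_mem (List.mem_finRange i))
  have hj := hi.of_mem_conjList
    (List.mem_map_of_mem (List.mem_filter.2 ⟨List.mem_finRange j, by simpa using hij⟩))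
  refine hj.mono ?_
  have := List.length_filter_le (fun j => decide (j ≠ i)) (List.finRange n)
  simp only [List.length_map, List.length_finRange] at this ⊢
  omega

theorem elimDerivable_formE_clause (hα : alphaG n adj ∈ Γ) {v w : Fin n} (hvw : adj v w = false)
    (i : ℕ) (hi : i + 1 < n) :
    ElimDerivable Γ (.imp (X ⟨i, by omega⟩ v) (.imp (X ⟨i + 1, hi⟩ w) .bot)) (3 * n + 4) := by
  have hE : ElimDerivable Γ (formE n adj) 4 :=
    (ElimDerivable.assumption hα).andE2.andE2.andE2.andE2
  have hv := hE.of_mem_conjList (List.mem_map_of_mem (List.mem_finRange v))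
  have hw := hv.of_mem_conjList
    (List.mem_map_of_mem (List.mem_filter.2 ⟨List.mem_finRange w, by simp [hvw]⟩))
  have hi := hw.of_mem_conjList
    (List.mem_map_of_mem (List.mem_finRange (⟨i, by omega⟩ : Fin (n - 1))))
  refine hi.mono ?_
  have := List.length_filter_le (fun w => decide ¬adj v w) (List.finRange n)
  simp only [List.length_map, List.length_finRange] at this ⊢
  omega

theorem elimDerivable_bot_of_assignment (hno : ¬ HamPath n adj) (hα : alphaG n adj ∈ Γ)
    (f : Fin n → Fin n) (hf : ∀ i, ElimDerivable Γ (X i (f i)) (n + 3)) :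
    ElimDerivable Γ .bot (3 * n + 6) := by
  obtain ⟨i, j, hij, hfij⟩ | ⟨i, hi, hadj⟩ := exists_collision_or_nonedge_of_not_hamPath hno f
  · have hj := hf j
    rw [← hfij] at hj
    exact ((hf i).bot_of_neg_neg hj (elimDerivable_formB_clause hα hij.symm (f i))).mono
      (by omega)
  · exact ((hf _).bot_of_neg_neg (hf _) (elimDerivable_formE_clause hα hadj i hi)).mono
      (by omega)

/-- `n + 3` bounds the derivations of the chosen atoms: each is an assumption or, for `n = 1`,
the derived clause `Cᵢ` itself. -/
theorem elimDerivable_bot_of_partial_assignment (hno : ¬ HamPath n adj) :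
    ∀ (k m : ℕ) (f : Fin n → Fin n) (Γ : Set (PF (Fin n × Fin n))), m + k = n →
      alphaG n adj ∈ Γ → (∀ i : Fin n, (i : ℕ) < m → ElimDerivable Γ (X i (f i)) (n + 3)) →
      ElimDerivable Γ .bot (3 * n + 6 + k * (n + 1))
  | 0, m, f, Γ, hmk, hα, hf =>
    (elimDerivable_bot_of_assignment hno hα f fun i => hf i (by omega)).mono (by simp)
  | k + 1, m, f, Γ, hmk, hα, hf => by
    let im : Fin n := ⟨m, by omega⟩
    refine ((elimDerivable_formC_clause hα im).disjList_elim
      (H := 3 * n + 6 + k * (n + 1)) ?_).mono ?_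
    · intro x hx Γ' hΓ hxΓ'
      obtain ⟨u, -, rfl⟩ := List.mem_map.1 hx
      refine elimDerivable_bot_of_partial_assignment hno k (m + 1) (Function.update f im u) Γ'
        (by omega) (hΓ hα) fun i hi => ?_
      by_cases him : i = im
      · subst him
        simpa using hxΓ'
      · rw [Function.update_of_ne him]
        have him' : (i : ℕ) ≠ m := fun h => him (Fin.ext h)
        exact (hf i (by omega)).mono_set hΓ
    · simp only [List.length_map, List.length_finRange, add_one_mul]
      omega

end Refutation

/-- There is a polynomial `p` such that for every simple directed graph `G` with
`n > 0` vertices: `G` has no Hamiltonian path if and only if there exists a normal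
tree-like NJ proof of `α_G → ⊥` whose height is at most `p(n)`. -/
theorem no_hamPath_iff_short_normal_NJ_proof :
    ∃ p : Polynomial ℕ, ∀ (n : ℕ), 0 < n → ∀ adj : Fin n → Fin n → Bool,
      (¬ HamPath n adj ↔
        ∃ t : NJT (Fin n × Fin n), t.Correct ∧ t.Normal ∧ t.ClosedUnder ∅ ∧
          t.lab = PF.neg (alphaG n adj) ∧ t.height ≤ p.eval n) := by
  refine ⟨.X ^ 2 + 4 * .X + 7, fun n _ adj => ⟨fun hno => ?_, ?_⟩⟩
  · have hd := elimDerivable_bot_of_partial_assignment hno n 0 id {alphaG n adj} (zero_add n)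
      rfl fun i hi => absurd hi (Nat.not_lt_zero _)
    obtain ⟨t, hc, hn, hcl, hl, ht⟩ := exists_proof_neg_of_elimDerivable_bot hd
    refine ⟨t, hc, hn, hcl, hl, ht.trans (le_of_eq ?_)⟩
    simp only [Polynomial.eval_add, Polynomial.eval_pow, Polynomial.eval_mul, Polynomial.eval_X,
      Polynomial.eval_ofNat]
    ring
  · rintro ⟨t, hc, -, hcl, hl, -⟩ hham
    exact not_satisfiable_of_proof_neg hc hcl hl (satisfiable_alphaG_of_hamPath hham)
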